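/- Suppose I* > (1−ε) Ī_α(Ψ) with ε ∈ (0,1), α₁ ≥ 2 (so α₂ ≤ 2), in the setting of the VH bound with positive γ₁, γ₂, Ψ and finite positive norms. Then ‖ (γ₂/Ψ)^{α₂}/‖γ₂/Ψ‖_{α₂}^{α₂} − γ₁γ₂/I* ‖₁ < √(2ε) + ε. -/

import Mathlib

open MeasureTheory

/-!
Put `p = α₂`, `q = α₁` and normalize `f = (γ₂/Ψ)/‖γ₂/Ψ‖_p`, `g = γ₁Ψ/‖γ₁Ψ‖_q`. With
`A = f^(p/2)` and `B = f^(1-p/2) g` we have `A² = f^p` and `AB = fg`, and since `q ≥ 2` weighted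
AM-GM gives `B² ≤ (1 - 2/q) f^p + (2/q) g^q`, so `∫ B² ≤ 1` and `∫ (A - B)² ≤ 2 - 2 ∫ fg < 2ε`.
As `f^p - fg = A (A - B)`, Cauchy-Schwarz bounds `‖f^p - fg‖₁` by `√(2ε)`; replacing `fg` by its
normalization `fg / ∫ fg` costs `1 - ∫ fg < ε` more.
-/

namespace Real

lemma sq_rpow_one_sub_div_two_mul_le {p q x y : ℝ} (hpq : p.HolderConjugate q) (hq : 2 ≤ q)
    (hx : 0 ≤ x) (hy : 0 ≤ y) :
    (x ^ (1 - p / 2) * y) ^ 2 ≤ (1 - 2 / q) * x ^ p + 2 / q * y ^ q := by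
  have hq0 : 0 < q := hpq.symm.pos
  have hexp : p * (1 - 2 / q) = (1 - p / 2) * (2 : ℕ) := by
    push_cast; linear_combination (-2) * hpq.div_conj_eq_sub_one
  have amgm := geom_mean_le_arith_mean2_weighted (sub_nonneg.2 ((div_le_one hq0).2 hq))
    (by positivity) (rpow_nonneg hx p) (rpow_nonneg hy q) (sub_add_cancel 1 (2 / q))
  rwa [← rpow_mul hx, hexp, rpow_mul_natCast hx, ← rpow_mul hy,
    mul_div_cancel₀ _ hq0.ne', rpow_two, ← mul_pow] at amgm

lemma rpow_div_two_sq {x : ℝ} (hx : 0 ≤ x) (p : ℝ) : (x ^ (p / 2)) ^ 2 = x ^ p := by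
  rw [← rpow_mul_natCast hx]; norm_num

lemma rpow_div_two_mul_rpow_one_sub_div_two_mul {x : ℝ} (hx : 0 ≤ x) (p y : ℝ) :
    x ^ (p / 2) * (x ^ (1 - p / 2) * y) = x * y := by
  rw [← mul_assoc, ← rpow_add' hx (by norm_num), add_sub_cancel, rpow_one]

end Real

section

variable {Z : Type*} [MeasurableSpace Z] {ν : Measure Z}

lemma aemeasurable_of_integrable_rpow {u : Z → ℝ} {p : ℝ} (hu : ∀ z, 0 ≤ u z) (hp : p ≠ 0)
    (hi : Integrable (fun z => u z ^ p) ν) : AEMeasurable u ν := by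
  simpa only [Real.rpow_rpow_inv (hu _) hp] using hi.aemeasurable.pow_const p⁻¹

lemma integral_sub_sq {a b : Z → ℝ} (ha : MemLp a 2 ν) (hb : MemLp b 2 ν) :
    ∫ z, (a z - b z) ^ 2 ∂ν
      = ∫ z, a z ^ 2 ∂ν - 2 * ∫ z, a z * b z ∂ν + ∫ z, b z ^ 2 ∂ν := by
  have hab : Integrable (fun z => a z * b z) ν := ha.integrable_mul hb
  have hdiff : Integrable (fun z => a z ^ 2 - 2 * (a z * b z)) ν :=
    ha.integrable_sq.sub (hab.const_mul 2)
  simp only [sub_sq, mul_assoc]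
  rw [integral_add hdiff hb.integrable_sq,
    integral_sub ha.integrable_sq (hab.const_mul 2), integral_const_mul]

lemma integral_mul_le_sqrt_mul_sqrt {a b : Z → ℝ} (ha : ∀ z, 0 ≤ a z) (hb : ∀ z, 0 ≤ b z)
    (ha2 : MemLp a 2 ν) (hb2 : MemLp b 2 ν) :
    ∫ z, a z * b z ∂ν ≤ √(∫ z, a z ^ 2 ∂ν) * √(∫ z, b z ^ 2 ∂ν) := by
  have := integral_mul_le_Lp_mul_Lq_of_nonneg Real.HolderConjugate.two_two
    (ae_of_all _ ha) (ae_of_all _ hb) (by simpa using ha2) (by simpa using hb2)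
  simpa only [Real.sqrt_eq_rpow, Real.rpow_two] using this

lemma integral_abs_sub_div_integral {h : Z → ℝ} (hh : ∀ z, 0 ≤ h z) (hI : 0 < ∫ z, h z ∂ν) :
    ∫ z, |h z - h z / ∫ w, h w ∂ν| ∂ν = |(∫ z, h z ∂ν) - 1| := by
  set I := ∫ z, h z ∂ν
  have hpt : ∀ z, |h z - h z / I| = |1 - I⁻¹| * h z := fun z => by
    rw [show h z - h z / I = (1 - I⁻¹) * h z by ring, abs_mul, abs_of_nonneg (hh z)]
  have hI' : I - 1 = (1 - I⁻¹) * I := by field_simp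
  simp only [hpt, integral_const_mul]
  rw [hI', abs_mul, abs_of_pos hI]

section HolderStability

variable {f g : Z → ℝ} {p q : ℝ}

lemma memLp_rpow_div_two (hf : ∀ z, 0 ≤ f z) (hp : p ≠ 0)
    (hif : Integrable (fun z => f z ^ p) ν) : MemLp (fun z => f z ^ (p / 2)) 2 ν := by
  refine (memLp_two_iff_integrable_sq
    ((aemeasurable_of_integrable_rpow hf hp hif).pow_const _).aestronglyMeasurable).2 ?_
  simpa only [Real.rpow_div_two_sq (hf _)] using hif

lemma memLp_rpow_one_sub_div_two_mul (hpq : p.HolderConjugate q) (hq : 2 ≤ q)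
    (hf : ∀ z, 0 ≤ f z) (hg : ∀ z, 0 ≤ g z)
    (hif : Integrable (fun z => f z ^ p) ν) (hig : Integrable (fun z => g z ^ q) ν) :
    MemLp (fun z => f z ^ (1 - p / 2) * g z) 2 ν := by
  have hmeas : AEStronglyMeasurable (fun z => f z ^ (1 - p / 2) * g z) ν :=
    (((aemeasurable_of_integrable_rpow hf hpq.ne_zero hif).pow_const _).mul
      (aemeasurable_of_integrable_rpow hg hpq.symm.ne_zero hig)).aestronglyMeasurable
  refine (memLp_two_iff_integrable_sq hmeas).2 <|
    ((hif.const_mul (1 - 2 / q)).add (hig.const_mul (2 / q))).mono' (hmeas.pow 2)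
      (ae_of_all _ fun z => ?_)
  rw [Real.norm_eq_abs, abs_of_nonneg (sq_nonneg _)]
  exact Real.sq_rpow_one_sub_div_two_mul_le hpq hq (hf z) (hg z)

lemma integral_sq_rpow_one_sub_div_two_mul_le_one (hpq : p.HolderConjugate q) (hq : 2 ≤ q)
    (hf : ∀ z, 0 ≤ f z) (hg : ∀ z, 0 ≤ g z)
    (hif : Integrable (fun z => f z ^ p) ν) (hig : Integrable (fun z => g z ^ q) ν)
    (hf1 : ∫ z, f z ^ p ∂ν = 1) (hg1 : ∫ z, g z ^ q ∂ν = 1) :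
    ∫ z, (f z ^ (1 - p / 2) * g z) ^ 2 ∂ν ≤ 1 :=
  calc ∫ z, (f z ^ (1 - p / 2) * g z) ^ 2 ∂ν
      ≤ ∫ z, ((1 - 2 / q) * f z ^ p + 2 / q * g z ^ q) ∂ν :=
        integral_mono (memLp_rpow_one_sub_div_two_mul hpq hq hf hg hif hig).integrable_sq
          ((hif.const_mul _).add (hig.const_mul _))
          fun z => Real.sq_rpow_one_sub_div_two_mul_le hpq hq (hf z) (hg z)
    _ = 1 := by
        rw [integral_add (hif.const_mul _) (hig.const_mul _), integral_const_mul,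
          integral_const_mul, hf1, hg1]
        ring

lemma integral_sq_rpow_div_two_sub_le (hpq : p.HolderConjugate q) (hq : 2 ≤ q)
    (hf : ∀ z, 0 ≤ f z) (hg : ∀ z, 0 ≤ g z)
    (hif : Integrable (fun z => f z ^ p) ν) (hig : Integrable (fun z => g z ^ q) ν)
    (hf1 : ∫ z, f z ^ p ∂ν = 1) (hg1 : ∫ z, g z ^ q ∂ν = 1) :
    ∫ z, (f z ^ (p / 2) - f z ^ (1 - p / 2) * g z) ^ 2 ∂ν ≤ 2 - 2 * ∫ z, f z * g z ∂ν := by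
  rw [integral_sub_sq (memLp_rpow_div_two hf hpq.ne_zero hif)
    (memLp_rpow_one_sub_div_two_mul hpq hq hf hg hif hig)]
  simp only [Real.rpow_div_two_sq (hf _), Real.rpow_div_two_mul_rpow_one_sub_div_two_mul (hf _),
    hf1]
  linarith [integral_sq_rpow_one_sub_div_two_mul_le_one hpq hq hf hg hif hig hf1 hg1]

lemma integral_abs_rpow_sub_mul_le (hpq : p.HolderConjugate q) (hq : 2 ≤ q)
    (hf : ∀ z, 0 ≤ f z) (hg : ∀ z, 0 ≤ g z)
    (hif : Integrable (fun z => f z ^ p) ν) (hig : Integrable (fun z => g z ^ q) ν)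
    (hf1 : ∫ z, f z ^ p ∂ν = 1) (hg1 : ∫ z, g z ^ q ∂ν = 1) :
    ∫ z, |f z ^ p - f z * g z| ∂ν ≤ √(2 - 2 * ∫ z, f z * g z ∂ν) := by
  set A : Z → ℝ := fun z => f z ^ (p / 2)
  set B : Z → ℝ := fun z => f z ^ (1 - p / 2) * g z
  have hA : MemLp A 2 ν := memLp_rpow_div_two hf hpq.ne_zero hif
  have hB : MemLp B 2 ν := memLp_rpow_one_sub_div_two_mul hpq hq hf hg hif hig
  have hA2 : ∀ z, A z ^ 2 = f z ^ p := fun z => Real.rpow_div_two_sq (hf z) p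
  have hAB : ∀ z, A z * B z = f z * g z := fun z =>
    Real.rpow_div_two_mul_rpow_one_sub_div_two_mul (hf z) p (g z)
  have hpt : ∀ z, |f z ^ p - f z * g z| = A z * |A z - B z| := fun z => by
    rw [← hA2, ← hAB, sq, ← mul_sub, abs_mul, abs_of_nonneg (Real.rpow_nonneg (hf z) _)]
  calc ∫ z, |f z ^ p - f z * g z| ∂ν
      = ∫ z, A z * |A z - B z| ∂ν := by simp only [hpt]
    _ ≤ √(∫ z, A z ^ 2 ∂ν) * √(∫ z, |A z - B z| ^ 2 ∂ν) :=
        integral_mul_le_sqrt_mul_sqrt (fun z => Real.rpow_nonneg (hf z) _)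
          (fun z => abs_nonneg _) hA (hA.sub hB).abs
    _ = √(∫ z, (A z - B z) ^ 2 ∂ν) := by simp only [hA2, hf1, sq_abs, Real.sqrt_one, one_mul]
    _ ≤ √(2 - 2 * ∫ z, f z * g z ∂ν) :=
        Real.sqrt_le_sqrt (integral_sq_rpow_div_two_sub_le hpq hq hf hg hif hig hf1 hg1)

theorem integral_abs_rpow_sub_mul_div_integral_lt (hpq : p.HolderConjugate q) (hq : 2 ≤ q)
    (hf : ∀ z, 0 ≤ f z) (hg : ∀ z, 0 ≤ g z)
    (hif : Integrable (fun z => f z ^ p) ν) (hig : Integrable (fun z => g z ^ q) ν)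
    (hf1 : ∫ z, f z ^ p ∂ν = 1) (hg1 : ∫ z, g z ^ q ∂ν = 1)
    (hI : 0 < ∫ z, f z * g z ∂ν) {ε : ℝ} (hgap : 1 - ε < ∫ z, f z * g z ∂ν) :
    ∫ z, |f z ^ p - f z * g z / ∫ w, f w * g w ∂ν| ∂ν < √(2 * ε) + ε := by
  set I := ∫ z, f z * g z ∂ν
  have hifg : Integrable (fun z => f z * g z) ν := by
    simpa only [Pi.mul_def, Real.rpow_div_two_mul_rpow_one_sub_div_two_mul (hf _)] using
      (memLp_rpow_div_two hf hpq.ne_zero hif).integrable_mul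
        (memLp_rpow_one_sub_div_two_mul hpq hq hf hg hif hig)
  have hI1 : I ≤ 1 := by
    have hsq : 0 ≤ ∫ z, (f z ^ (p / 2) - f z ^ (1 - p / 2) * g z) ^ 2 ∂ν :=
      integral_nonneg fun z => sq_nonneg _
    linarith [integral_sq_rpow_div_two_sub_le hpq hq hf hg hif hig hf1 hg1]
  have hnormalize : ∫ z, |f z * g z - f z * g z / I| ∂ν = 1 - I := by
    rw [integral_abs_sub_div_integral (fun z => mul_nonneg (hf z) (hg z)) hI, abs_of_nonpos] <;>
      linarith
  have hi₁ : Integrable (fun z => |f z ^ p - f z * g z|) ν := (hif.sub hifg).abs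
  have hi₂ : Integrable (fun z => |f z * g z - f z * g z / I|) ν :=
    (hifg.sub (hifg.div_const I)).abs
  calc ∫ z, |f z ^ p - f z * g z / I| ∂ν
      ≤ ∫ z, (|f z ^ p - f z * g z| + |f z * g z - f z * g z / I|) ∂ν :=
        integral_mono (hif.sub (hifg.div_const I)).abs (hi₁.add hi₂) fun z => abs_sub_le _ _ _
    _ = ∫ z, |f z ^ p - f z * g z| ∂ν + (1 - I) := by rw [integral_add hi₁ hi₂, hnormalize]
    _ < √(2 * ε) + ε := by
        gcongr ?_ + ?_
        · exact (integral_abs_rpow_sub_mul_le hpq hq hf hg hif hig hf1 hg1).trans_lt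
            (Real.sqrt_lt_sqrt (by linarith) (by linarith))
        · linarith

end HolderStability

section Normalization

variable {u : Z → ℝ} {p : ℝ}

lemma div_integral_rpow_rpow_one_div_rpow (hu : ∀ z, 0 ≤ u z) (hp : p ≠ 0) (z : Z) :
    (u z / (∫ w, u w ^ p ∂ν) ^ (1 / p)) ^ p = u z ^ p / ∫ w, u w ^ p ∂ν := by
  have hX : 0 ≤ ∫ w, u w ^ p ∂ν := integral_nonneg fun w => Real.rpow_nonneg (hu w) p
  rw [Real.div_rpow (hu z) (Real.rpow_nonneg hX _), one_div, Real.rpow_inv_rpow hX hp]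

lemma integrable_div_integral_rpow_rpow_one_div_rpow (hu : ∀ z, 0 ≤ u z) (hp : p ≠ 0)
    (hi : Integrable (fun z => u z ^ p) ν) :
    Integrable (fun z => (u z / (∫ w, u w ^ p ∂ν) ^ (1 / p)) ^ p) ν := by
  simpa only [div_integral_rpow_rpow_one_div_rpow hu hp] using hi.div_const _

lemma integral_div_integral_rpow_rpow_one_div_rpow (hu : ∀ z, 0 ≤ u z) (hp : p ≠ 0)
    (hN : 0 < (∫ w, u w ^ p ∂ν) ^ (1 / p)) :
    ∫ z, (u z / (∫ w, u w ^ p ∂ν) ^ (1 / p)) ^ p ∂ν = 1 := by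
  refine (integral_congr_ae (ae_of_all _ (div_integral_rpow_rpow_one_div_rpow hu hp))).trans ?_
  rw [integral_div, div_self]
  rintro hX
  rw [hX, Real.zero_rpow (one_div_ne_zero hp)] at hN
  exact hN.false

end Normalization

end

theorem vh_approximation_guarantee_second_general
    {Z : Type*} [MeasurableSpace Z] (ν : Measure Z)
    (γ₁ γ₂ Ψ : Z → ℝ)
    (hγ₁ : ∀ z, 0 < γ₁ z) (hγ₂ : ∀ z, 0 < γ₂ z) (hΨ : ∀ z, 0 < Ψ z)
    (α₁ α₂ : ℝ) (hα₁ : 2 ≤ α₁) (hconj : 1 / α₁ + 1 / α₂ = 1)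
    (hint₁ : Integrable (fun z => (γ₁ z * Ψ z) ^ α₁) ν)
    (hint₂ : Integrable (fun z => (γ₂ z / Ψ z) ^ α₂) ν)
    (hIpos : 0 < ∫ z, γ₁ z * γ₂ z ∂ν)
    (hN₁pos : 0 < (∫ z, (γ₁ z * Ψ z) ^ α₁ ∂ν) ^ (1 / α₁))
    (hN₂pos : 0 < (∫ z, (γ₂ z / Ψ z) ^ α₂ ∂ν) ^ (1 / α₂))
    (ε : ℝ)
    (hgap : ∫ z, γ₁ z * γ₂ z ∂ν >
      (1 - ε) * ((∫ z, (γ₁ z * Ψ z) ^ α₁ ∂ν) ^ (1 / α₁) *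
        (∫ z, (γ₂ z / Ψ z) ^ α₂ ∂ν) ^ (1 / α₂))) :
    ∫ z, |(γ₂ z / Ψ z) ^ α₂ / (∫ w, (γ₂ w / Ψ w) ^ α₂ ∂ν) -
        γ₁ z * γ₂ z / (∫ w, γ₁ w * γ₂ w ∂ν)| ∂ν
      < Real.sqrt (2 * ε) + ε := by
  have hpq : α₂.HolderConjugate α₁ :=
    (Real.holderConjugate_iff.2 ⟨by linarith, by simpa only [one_div] using hconj⟩).symm
  have hu : ∀ z, 0 ≤ γ₂ z / Ψ z := fun z => (div_pos (hγ₂ z) (hΨ z)).le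
  have hv : ∀ z, 0 ≤ γ₁ z * Ψ z := fun z => (mul_pos (hγ₁ z) (hΨ z)).le
  have hfα := div_integral_rpow_rpow_one_div_rpow (ν := ν) hu hpq.ne_zero
  set N₁ := (∫ z, (γ₁ z * Ψ z) ^ α₁ ∂ν) ^ (1 / α₁)
  set N₂ := (∫ z, (γ₂ z / Ψ z) ^ α₂ ∂ν) ^ (1 / α₂)
  have hfg : ∀ z, γ₂ z / Ψ z / N₂ * (γ₁ z * Ψ z / N₁) = γ₁ z * γ₂ z / (N₁ * N₂) := fun z => by
    field_simp [(hΨ z).ne']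
  have hI : ∫ z, γ₂ z / Ψ z / N₂ * (γ₁ z * Ψ z / N₁) ∂ν
      = (∫ z, γ₁ z * γ₂ z ∂ν) / (N₁ * N₂) := by
    simp only [hfg, integral_div]
  have key := integral_abs_rpow_sub_mul_div_integral_lt hpq hα₁
    (fun z => div_nonneg (hu z) hN₂pos.le) (fun z => div_nonneg (hv z) hN₁pos.le)
    (integrable_div_integral_rpow_rpow_one_div_rpow hu hpq.ne_zero hint₂)
    (integrable_div_integral_rpow_rpow_one_div_rpow hv hpq.symm.ne_zero hint₁)
    (integral_div_integral_rpow_rpow_one_div_rpow hu hpq.ne_zero hN₂pos)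
    (integral_div_integral_rpow_rpow_one_div_rpow hv hpq.symm.ne_zero hN₁pos)
    (by rw [hI]; positivity) (ε := ε) (by rw [hI, lt_div_iff₀ (by positivity)]; exact hgap)
  rw [hI] at key
  simp only [hfα, hfg] at key
  convert key using 5
  field_simp

theorem vh_approximation_guarantee_second
    {Z : Type*} [MeasurableSpace Z] (ν : Measure Z)
    (γ₁ γ₂ Ψ : Z → ℝ)
    (hγ₁ : ∀ z, 0 < γ₁ z) (hγ₂ : ∀ z, 0 < γ₂ z) (hΨ : ∀ z, 0 < Ψ z)
    (hmγ₁ : Measurable γ₁) (hmγ₂ : Measurable γ₂) (hmΨ : Measurable Ψ)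
    (α₁ α₂ : ℝ) (hα₁ : 2 ≤ α₁) (hα₂ : 1 < α₂) (hconj : 1 / α₁ + 1 / α₂ = 1)
    (hint : Integrable (fun z => γ₁ z * γ₂ z) ν)
    (hint₁ : Integrable (fun z => (γ₁ z * Ψ z) ^ α₁) ν)
    (hint₂ : Integrable (fun z => (γ₂ z / Ψ z) ^ α₂) ν)
    (hIpos : 0 < ∫ z, γ₁ z * γ₂ z ∂ν)
    (hN₁pos : 0 < (∫ z, (γ₁ z * Ψ z) ^ α₁ ∂ν) ^ (1 / α₁))
    (hN₂pos : 0 < (∫ z, (γ₂ z / Ψ z) ^ α₂ ∂ν) ^ (1 / α₂))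
    (ε : ℝ) (hε0 : 0 < ε) (hε1 : ε < 1)
    (hgap : ∫ z, γ₁ z * γ₂ z ∂ν >
      (1 - ε) * ((∫ z, (γ₁ z * Ψ z) ^ α₁ ∂ν) ^ (1 / α₁) *
        (∫ z, (γ₂ z / Ψ z) ^ α₂ ∂ν) ^ (1 / α₂))) :
    ∫ z, |(γ₂ z / Ψ z) ^ α₂ / (∫ w, (γ₂ w / Ψ w) ^ α₂ ∂ν) -
        γ₁ z * γ₂ z / (∫ w, γ₁ w * γ₂ w ∂ν)| ∂ν
      < Real.sqrt (2 * ε) + ε :=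
  vh_approximation_guarantee_second_general ν γ₁ γ₂ Ψ hγ₁ hγ₂ hΨ α₁ α₂ hα₁ hconj hint₁ hint₂ hIpos
    hN₁pos hN₂pos ε hgap
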